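/- Let H be an n-vertex linear r-uniform hypergraph that is Berge-K_{2,t}-free and Berge-C₃-free, with t ≥ 2. Then for every vertex u, ∑_{v ∈ N(u)} d(v) ≤ (r−t)·d(u) + (t−1)(n−1)/(r−1). -/

import Mathlib

open Finset

variable {V : Type*} [Fintype V] [DecidableEq V]

/-- The degree of a vertex: the number of hyperedges containing it. -/
def hdeg (E : Finset (Finset V)) (v : V) : ℕ :=
  (E.filter (fun e => v ∈ e)).card

open Classical in
/-- The neighborhood of a vertex: vertices at distance exactly one. -/
noncomputable def nbrs (E : Finset (Finset V)) (v : V) : Finset V :=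
  Finset.univ.filter (fun u => u ≠ v ∧ ∃ e ∈ E, v ∈ e ∧ u ∈ e)

/-- `E` is the edge set of an `r`-uniform hypergraph. -/
def Uniform (E : Finset (Finset V)) (r : ℕ) : Prop := ∀ e ∈ E, e.card = r

/-- A hypergraph is linear if any two distinct edges share at most one vertex. -/
def LinearH (E : Finset (Finset V)) : Prop :=
  ∀ e₁ ∈ E, ∀ e₂ ∈ E, e₁ ≠ e₂ → (e₁ ∩ e₂).card ≤ 1

/-- `lam` is an eigenvalue of the adjacency tensor of the `r`-uniform hypergraph `E`:
there is a nonzero complex vector `x` with `A(H) x^{r-1} = lam x^{[r-1]}`. -/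
def IsAdjEigenvalue (E : Finset (Finset V)) (r : ℕ) (lam : ℂ) : Prop :=
  ∃ x : V → ℂ, x ≠ 0 ∧ ∀ v : V,
    ∑ e ∈ E.filter (fun e => v ∈ e), ∏ u ∈ e.erase v, x u = lam * (x v) ^ (r - 1)

/-- The spectral radius of the adjacency tensor: max modulus of eigenvalues. -/
noncomputable def specRad (E : Finset (Finset V)) (r : ℕ) : ℝ :=
  sSup {z : ℝ | ∃ lam : ℂ, IsAdjEigenvalue E r lam ∧ z = ‖lam‖}

/-- The adjacency matrix of the 2-shadow multigraph of `E`. -/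
noncomputable def shadowMatrix (E : Finset (Finset V)) : Matrix V V ℝ :=
  fun u v => if u = v then 0 else ((E.filter (fun e => u ∈ e ∧ v ∈ e)).card : ℝ)

/-- The spectral radius of a real matrix: max modulus of complex eigenvalues. -/
noncomputable def matSpecRad (A : Matrix V V ℝ) : ℝ :=
  sSup {z : ℝ | ∃ (lam : ℂ) (x : V → ℂ), x ≠ 0 ∧
    (A.map (Complex.ofReal)).mulVec x = lam • x ∧ z = ‖lam‖}

/-- The number of 1-walks starting at `u`: pairs `(e, v)` with `u ∈ e`, `v ∈ e`, `v ≠ u`. -/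
def w1 (E : Finset (Finset V)) (u : V) : ℕ :=
  ((E ×ˢ (univ : Finset V)).filter
    (fun p => u ∈ p.1 ∧ p.2 ∈ p.1 ∧ p.2 ≠ u)).card

/-- The number of 2-walks starting at `u`. -/
def w2 (E : Finset (Finset V)) (u : V) : ℕ :=
  (((E ×ˢ (univ : Finset V)) ×ˢ (E ×ˢ (univ : Finset V))).filter
    (fun p => u ∈ p.1.1 ∧ p.1.2 ∈ p.1.1 ∧ p.1.2 ≠ u ∧
      p.1.2 ∈ p.2.1 ∧ p.2.2 ∈ p.2.1 ∧ p.2.2 ≠ p.1.2)).card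

/-- `E` contains a Berge triangle. -/
def HasBergeC3 (E : Finset (Finset V)) : Prop :=
  ∃ e₁ ∈ E, ∃ e₂ ∈ E, ∃ e₃ ∈ E, ∃ v₁ v₂ v₃ : V,
    e₁ ≠ e₂ ∧ e₂ ≠ e₃ ∧ e₁ ≠ e₃ ∧ v₁ ≠ v₂ ∧ v₂ ≠ v₃ ∧ v₁ ≠ v₃ ∧
    v₁ ∈ e₁ ∧ v₂ ∈ e₁ ∧ v₂ ∈ e₂ ∧ v₃ ∈ e₂ ∧ v₃ ∈ e₃ ∧ v₁ ∈ e₃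

/-- `E` contains a Berge-`K_{s,t}`: disjoint vertex sets `S`, `T` of sizes `s`, `t`
and an injective assignment of distinct hyperedges to the pairs. -/
def HasBergeKst (E : Finset (Finset V)) (s t : ℕ) : Prop :=
  ∃ (S T : Finset V) (f : V → V → Finset V),
    S.card = s ∧ T.card = t ∧ Disjoint S T ∧
    (∀ a ∈ S, ∀ b ∈ T, f a b ∈ E ∧ a ∈ f a b ∧ b ∈ f a b) ∧
    (∀ a ∈ S, ∀ b ∈ T, ∀ a' ∈ S, ∀ b' ∈ T, f a b = f a' b' → a = a' ∧ b = b')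

/-- `E` contains a Berge-`K_{s,t}` with the `s`-side inside `V₁` and the `t`-side
inside `V₂`. -/
def HasBergeKstIn (E : Finset (Finset V)) (s t : ℕ) (V₁ V₂ : Finset V) : Prop :=
  ∃ (S T : Finset V) (f : V → V → Finset V),
    S ⊆ V₁ ∧ T ⊆ V₂ ∧ S.card = s ∧ T.card = t ∧ Disjoint S T ∧
    (∀ a ∈ S, ∀ b ∈ T, f a b ∈ E ∧ a ∈ f a b ∧ b ∈ f a b) ∧
    (∀ a ∈ S, ∀ b ∈ T, ∀ a' ∈ S, ∀ b' ∈ T, f a b = f a' b' → a = a' ∧ b = b')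

/-- `E` is hm-bipartite with head part `V₁` and mass part `V₂`: each edge meets
`V₁` in exactly one vertex and `V₂` in the other `r−1` vertices. -/
def HmBipartite (E : Finset (Finset V)) (r : ℕ) (V₁ V₂ : Finset V) : Prop :=
  Disjoint V₁ V₂ ∧ V₁ ∪ V₂ = Finset.univ ∧
  ∀ e ∈ E, (e ∩ V₁).card = 1 ∧ (e ∩ V₂).card = r - 1

/-- The generalized binomial coefficient `C(x, k) = x(x−1)⋯(x−k+1)/k!` for real `x`. -/
noncomputable def genBinom (x : ℝ) (k : ℕ) : ℝ :=
  (descPochhammer ℝ k).eval x / (Nat.factorial k)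

/-!
Split the degree sum over the edges: an edge through `u` contributes its `r - 1` vertices of
`N(u)`, and since there is no Berge triangle every other edge meets `N(u)` at most once. Hence
the sum is `(r - 1) d(u) + |F|`, where `F` is the set of edges avoiding `u` that meet `N(u)`.
Each edge of `F` has its other `r - 1` vertices outside `{u} ∪ N(u)`, and a vertex `w` out there
lies on fewer than `t` edges of `F`: `t` of them reach `t` distinct neighbours of `u`, which
together with edges back to `u` form a Berge-`K_{2,t}` on `{u, w}`. Counting these incidences
gives `(r - 1) |F| ≤ (t - 1) (n - 1 - (r - 1) d(u))`.
-/

section Hypergraph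

variable {α : Type*} [DecidableEq α] {E : Finset (Finset α)}

theorem Finset.sum_card_inter_eq_sum_card_filter_mem (s : Finset α) (B : Finset (Finset α)) :
    ∑ b ∈ B, #(s ∩ b) = ∑ a ∈ s, #{b ∈ B | a ∈ b} := by
  simp_rw [← filter_mem_eq_inter, card_eq_sum_ones, sum_filter]
  exact sum_comm

theorem LinearH.edge_unique (hL : LinearH E) {x y : α} (hxy : x ≠ y) {e₁ e₂ : Finset α}
    (h₁ : e₁ ∈ E) (h₂ : e₂ ∈ E) (hx₁ : x ∈ e₁) (hy₁ : y ∈ e₁) (hx₂ : x ∈ e₂) (hy₂ : y ∈ e₂) :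
    e₁ = e₂ := by
  by_contra hne
  exact hxy <| card_le_one.mp (hL e₁ h₁ e₂ h₂ hne) x (mem_inter.mpr ⟨hx₁, hx₂⟩) y
    (mem_inter.mpr ⟨hy₁, hy₂⟩)

theorem hasBergeKst_two_of_injOn {a₁ a₂ : α} (ha : a₁ ≠ a₂) {T : Finset α} (ha₁ : a₁ ∉ T)
    (ha₂ : a₂ ∉ T) {g₁ g₂ : α → Finset α}
    (hg₁ : ∀ b ∈ T, g₁ b ∈ E ∧ a₁ ∈ g₁ b ∧ b ∈ g₁ b)
    (hg₂ : ∀ b ∈ T, g₂ b ∈ E ∧ a₂ ∈ g₂ b ∧ b ∈ g₂ b)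
    (hinj₁ : Set.InjOn g₁ T) (hinj₂ : Set.InjOn g₂ T)
    (hne : ∀ b ∈ T, ∀ b' ∈ T, g₁ b ≠ g₂ b') :
    HasBergeKst E 2 #T := by
  refine ⟨{a₁, a₂}, T, fun a b => if a = a₁ then g₁ b else g₂ b, card_pair ha, rfl, ?_, ?_, ?_⟩
  · simp [disjoint_left, ha₁, ha₂]
  · intro a ha' b hb
    rcases mem_insert.mp ha' with rfl | ha'
    · simpa using hg₁ b hb
    · rw [mem_singleton.mp ha']
      simpa [ha.symm] using hg₂ b hb
  · intro a ha' b hb a' ha'' b' hb' h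
    simp only [mem_insert, mem_singleton] at ha' ha''
    rcases ha' with rfl | rfl <;> rcases ha'' with rfl | rfl
    · exact ⟨rfl, hinj₁ hb hb' (by simpa using h)⟩
    · simp only [if_pos, if_neg ha.symm] at h
      exact absurd h (hne b hb b' hb')
    · simp only [if_pos, if_neg ha.symm] at h
      exact absurd h.symm (hne b' hb' b hb)
    · simp only [if_neg ha.symm] at h
      exact ⟨rfl, hinj₂ hb hb' h⟩

variable [Fintype α] {r t : ℕ}

theorem mem_nbrs {u x : α} : x ∈ nbrs E u ↔ x ≠ u ∧ ∃ e ∈ E, u ∈ e ∧ x ∈ e := by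
  simp [nbrs]

theorem card_nbrs_inter_of_mem (hU : Uniform E r) {u : α} {e : Finset α} (he : e ∈ E)
    (hu : u ∈ e) : #(nbrs E u ∩ e) = r - 1 := by
  have : nbrs E u ∩ e = e.erase u := by
    ext x
    simp only [mem_inter, mem_erase, mem_nbrs]
    exact ⟨fun ⟨⟨hxu, _⟩, hxe⟩ => ⟨hxu, hxe⟩, fun ⟨hxu, hxe⟩ => ⟨⟨hxu, e, he, hu, hxe⟩, hxe⟩⟩
  rw [this, card_erase_of_mem hu, hU e he]

theorem card_nbrs_inter_le_one (hL : LinearH E) (hC3 : ¬ HasBergeC3 E) {u : α} {e : Finset α}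
    (he : e ∈ E) (hu : u ∉ e) : #(nbrs E u ∩ e) ≤ 1 := by
  refine card_le_one.mpr fun v₁ hv₁ v₂ hv₂ => ?_
  by_contra hne
  obtain ⟨⟨hv₁u, f₁, hf₁, huf₁, hv₁f₁⟩, hv₁e⟩ := And.imp_left mem_nbrs.mp (mem_inter.mp hv₁)
  obtain ⟨⟨hv₂u, f₂, hf₂, huf₂, hv₂f₂⟩, hv₂e⟩ := And.imp_left mem_nbrs.mp (mem_inter.mp hv₂)
  have hef₁ : e ≠ f₁ := fun h => hu (h ▸ huf₁)
  have hef₂ : e ≠ f₂ := fun h => hu (h ▸ huf₂)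
  by_cases hf : f₁ = f₂
  · exact hef₁ (hL.edge_unique hne he hf₁ hv₁e hv₂e hv₁f₁ (hf ▸ hv₂f₂))
  · exact hC3 ⟨f₁, hf₁, e, he, f₂, hf₂, u, v₁, v₂, hef₁.symm, hef₂, hf, hv₁u.symm, hne,
      hv₂u.symm, huf₁, hv₁f₁, hv₁e, hv₂e, hv₂f₂, huf₂⟩

theorem card_nbrs (hU : Uniform E r) (hL : LinearH E) (u : α) :
    #(nbrs E u) = (r - 1) * hdeg E u := by
  have hfiber : ∀ x ∈ nbrs E u, #{e ∈ {e ∈ E | u ∈ e} | x ∈ e} = 1 := by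
    intro x hx
    obtain ⟨hxu, e, he, hue, hxe⟩ := mem_nbrs.mp hx
    refine le_antisymm (card_le_one.mpr fun e₁ h₁ e₂ h₂ => ?_) (card_pos.mpr ⟨e, by simp [*]⟩)
    simp only [mem_filter] at h₁ h₂
    exact hL.edge_unique hxu h₁.1.1 h₂.1.1 h₁.2 h₁.1.2 h₂.2 h₂.1.2
  calc #(nbrs E u) = ∑ e ∈ {e ∈ E | u ∈ e}, #(nbrs E u ∩ e) := by
        rw [sum_card_inter hfiber, mul_one]
    _ = ∑ e ∈ {e ∈ E | u ∈ e}, (r - 1) := sum_congr rfl fun e he =>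
        card_nbrs_inter_of_mem hU (mem_filter.mp he).1 (mem_filter.mp he).2
    _ = (r - 1) * hdeg E u := by rw [sum_const, smul_eq_mul, mul_comm, hdeg]

variable (E) in
noncomputable def edgesMeetingNbrs (u : α) : Finset (Finset α) :=
  {e ∈ E | u ∉ e ∧ (nbrs E u ∩ e).Nonempty}

variable (E) in
noncomputable def farVertices (u : α) : Finset α :=
  (insert u (nbrs E u))ᶜ

theorem sum_hdeg_nbrs (hU : Uniform E r) (hL : LinearH E) (hC3 : ¬ HasBergeC3 E) (u : α) :
    ∑ v ∈ nbrs E u, hdeg E v = (r - 1) * hdeg E u + #(edgesMeetingNbrs E u) := by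
  rw [show ∑ v ∈ nbrs E u, hdeg E v = ∑ e ∈ E, #(nbrs E u ∩ e) from
    (sum_card_inter_eq_sum_card_filter_mem _ _).symm, ← sum_filter_add_sum_filter_not E (u ∈ ·)]
  congr 1
  · rw [sum_congr rfl fun e he =>
      card_nbrs_inter_of_mem hU (mem_filter.mp he).1 (mem_filter.mp he).2,
      sum_const, smul_eq_mul, mul_comm]
    rfl
  · rw [edgesMeetingNbrs, card_filter, sum_filter]
    refine sum_congr rfl fun e he => ?_
    by_cases hu : u ∈ e
    · simp [hu]
    · have := card_nbrs_inter_le_one hL hC3 he hu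
      simp only [hu, not_false_eq_true, if_true, true_and, ← card_pos]
      split_ifs <;> omega

theorem card_farVertices_inter (hU : Uniform E r) (hL : LinearH E) (hC3 : ¬ HasBergeC3 E)
    {u : α} {e : Finset α} (he : e ∈ edgesMeetingNbrs E u) :
    #(farVertices E u ∩ e) = r - 1 := by
  obtain ⟨heE, hu, hmeet⟩ := mem_filter.mp he
  have hone : #(e ∩ insert u (nbrs E u)) = 1 := by
    rw [inter_insert_of_notMem hu, inter_comm]
    exact le_antisymm (card_nbrs_inter_le_one hL hC3 heE hu) (card_pos.mpr hmeet)
  have := card_sdiff_add_card_inter e (insert u (nbrs E u))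
  rw [hone, hU e heE, sdiff_eq_inter_compl, inter_comm] at this
  rw [farVertices]
  omega

theorem card_farVertices (hU : Uniform E r) (hL : LinearH E) (u : α) :
    #(farVertices E u) + ((r - 1) * hdeg E u + 1) = Fintype.card α := by
  have hu : u ∉ nbrs E u := fun h => (mem_nbrs.mp h).1 rfl
  rw [← card_add_card_compl (insert u (nbrs E u)), card_insert_of_notMem hu, card_nbrs hU hL,
    farVertices]
  omega

theorem card_filter_mem_edgesMeetingNbrs_le (hL : LinearH E) {u w : α} (hwN : w ∉ nbrs E u) :
    #{e ∈ edgesMeetingNbrs E u | w ∈ e} ≤ #{b ∈ nbrs E u | ∃ e ∈ E, u ∉ e ∧ w ∈ e ∧ b ∈ e} := by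
  have : Nonempty α := ⟨w⟩
  have hmeet : ∀ e ∈ {e ∈ edgesMeetingNbrs E u | w ∈ e},
      ∃ b ∈ nbrs E u, b ∈ e ∧ e ∈ E ∧ u ∉ e ∧ w ∈ e := fun e he => by
    simp only [edgesMeetingNbrs, mem_filter] at he
    obtain ⟨⟨heE, hu, b, hb⟩, hw⟩ := he
    exact ⟨b, (mem_inter.mp hb).1, (mem_inter.mp hb).2, heE, hu, hw⟩
  choose! ν hνN hνe hE hu hw using hmeet
  refine card_le_card_of_injOn ν (fun e he => mem_filter.mpr
    ⟨hνN e he, e, hE e he, hu e he, hw e he, hνe e he⟩) fun e₁ h₁ e₂ h₂ h => ?_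
  have hνw : ν e₁ ≠ w := fun h' => hwN (h' ▸ hνN e₁ h₁)
  exact hL.edge_unique hνw (hE e₁ h₁) (hE e₂ h₂) (hνe e₁ h₁) (hw e₁ h₁) (h ▸ hνe e₂ h₂) (hw e₂ h₂)

theorem card_filter_mem_edgesMeetingNbrs_lt (hL : LinearH E) (hK : ¬ HasBergeKst E 2 t)
    (hC3 : ¬ HasBergeC3 E) {u w : α} (hwu : w ≠ u) (hwN : w ∉ nbrs E u) :
    #{e ∈ edgesMeetingNbrs E u | w ∈ e} < t := by
  refine (card_filter_mem_edgesMeetingNbrs_le hL hwN).trans_lt ?_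
  by_contra! ht
  obtain ⟨T, hTsub, hT⟩ := exists_subset_card_eq ht
  have : Nonempty α := ⟨u⟩
  have hTN : ∀ b ∈ T, b ∈ nbrs E u := fun b hb => (mem_filter.mp (hTsub hb)).1
  have hwedge : ∀ b ∈ T, ∃ e ∈ E, u ∉ e ∧ w ∈ e ∧ b ∈ e := fun b hb =>
    (mem_filter.mp (hTsub hb)).2
  choose! μ hμE hμu hμw hμb using hwedge
  have huedge : ∀ b ∈ T, ∃ e ∈ E, u ∈ e ∧ b ∈ e := fun b hb => (mem_nbrs.mp (hTN b hb)).2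
  choose! g hgE hgu hgb using huedge
  have hTNw : ∀ b ∈ T, b ∈ nbrs E w := fun b hb =>
    mem_nbrs.mpr ⟨fun h => hwN (h ▸ hTN b hb), μ b, hμE b hb, hμw b hb, hμb b hb⟩
  refine hK (hT ▸ hasBergeKst_two_of_injOn hwu.symm (fun h => (mem_nbrs.mp (hTN u h)).1 rfl)
    (fun h => hwN (hTN w h)) (fun b hb => ⟨hgE b hb, hgu b hb, hgb b hb⟩)
    (fun b hb => ⟨hμE b hb, hμw b hb, hμb b hb⟩) ?_ ?_
    fun b hb b' hb' h => hμu b' hb' (h ▸ hgu b hb))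
  · -- the edge `g b` avoids `w`, so it meets `N(w)` at most once
    intro b hb b' hb' h
    have hw : w ∉ g b := fun hw => hwN (mem_nbrs.mpr ⟨hwu, g b, hgE b hb, hgu b hb, hw⟩)
    exact card_le_one.mp (card_nbrs_inter_le_one hL hC3 (hgE b hb) hw) b
      (mem_inter.mpr ⟨hTNw b hb, hgb b hb⟩) b' (mem_inter.mpr ⟨hTNw b' hb', h ▸ hgb b' hb'⟩)
  · intro b hb b' hb' h
    exact card_le_one.mp (card_nbrs_inter_le_one hL hC3 (hμE b hb) (hμu b hb)) b
      (mem_inter.mpr ⟨hTN b hb, hμb b hb⟩) b' (mem_inter.mpr ⟨hTN b' hb', h ▸ hμb b' hb'⟩)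

theorem mul_card_edgesMeetingNbrs_add_card_le (hU : Uniform E r) (hL : LinearH E)
    (hK : ¬ HasBergeKst E 2 t) (hC3 : ¬ HasBergeC3 E) (u : α) :
    (r - 1) * #(edgesMeetingNbrs E u) + #(farVertices E u) ≤ t * #(farVertices E u) :=
  calc (r - 1) * #(edgesMeetingNbrs E u) + #(farVertices E u)
      = ∑ x ∈ farVertices E u, (#{e ∈ edgesMeetingNbrs E u | x ∈ e} + 1) := by
        rw [sum_add_distrib, ← sum_card_inter_eq_sum_card_filter_mem,
          sum_congr rfl fun e he => card_farVertices_inter hU hL hC3 he, sum_const, sum_const,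
          smul_eq_mul, smul_eq_mul, mul_one, mul_comm]
    _ ≤ ∑ _x ∈ farVertices E u, t := sum_le_sum fun x hx => by
        simp only [farVertices, mem_compl, mem_insert, not_or] at hx
        exact card_filter_mem_edgesMeetingNbrs_lt hL hK hC3 hx.1 hx.2
    _ = t * #(farVertices E u) := by rw [sum_const, smul_eq_mul, mul_comm]

end Hypergraph

theorem stmt13_general {V : Type*} [Fintype V] [DecidableEq V]
    (E : Finset (Finset V)) (r t n : ℕ) (hr : 2 ≤ r)
    (hn : Fintype.card V = n) (hU : Uniform E r) (hL : LinearH E)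
    (hK : ¬ HasBergeKst E 2 t) (hC3 : ¬ HasBergeC3 E) (u : V) :
    ∑ v ∈ nbrs E u, (hdeg E v : ℝ) ≤
      ((r:ℝ) - (t:ℝ)) * (hdeg E u : ℝ) + ((t:ℝ) - 1) * ((n:ℝ) - 1) / ((r:ℝ) - 1) := by
  have hsum := sum_hdeg_nbrs hU hL hC3 u
  have hF := mul_card_edgesMeetingNbrs_add_card_le hU hL hK hC3 u
  have hW := card_farVertices hU hL u
  obtain ⟨a, rfl⟩ : ∃ a, r = a + 1 := ⟨r - 1, by omega⟩
  have ha : (0 : ℝ) < a := by exact_mod_cast (by omega : 0 < a)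
  simp only [Nat.add_sub_cancel] at hsum hF hW
  rw [hn] at hW
  rw [← Nat.cast_sum, hsum, ← sub_le_iff_le_add', Nat.cast_add_one, add_sub_cancel_right,
    le_div_iff₀ ha]
  have hF' : (a : ℝ) * #(edgesMeetingNbrs E u) + #(farVertices E u)
      ≤ t * #(farVertices E u) := by exact_mod_cast hF
  have hW' : (#(farVertices E u) : ℝ) + (a * hdeg E u + 1) = n := by exact_mod_cast hW
  push_cast
  linear_combination hF' + ((t : ℝ) - 1) * hW'

/-- neighborhood degree sum bound in Berge-K_{2,t}-free, Berge-C₃-free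
linear hypergraphs. -/
theorem stmt13 {V : Type*} [Fintype V] [DecidableEq V]
    (E : Finset (Finset V)) (r t n : ℕ) (hr : 2 ≤ r) (ht : 2 ≤ t)
    (hn : Fintype.card V = n) (hU : Uniform E r) (hL : LinearH E)
    (hK : ¬ HasBergeKst E 2 t) (hC3 : ¬ HasBergeC3 E) (u : V) :
    ∑ v ∈ nbrs E u, (hdeg E v : ℝ) ≤
      ((r:ℝ) - (t:ℝ)) * (hdeg E u : ℝ) + ((t:ℝ) - 1) * ((n:ℝ) - 1) / ((r:ℝ) - 1) :=
  stmt13_general E r t n hr hn hU hL hK hC3 u
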